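/- arXiv:1403.1665 — 4 statements merged into one kernel-verified Lean document; each statement's English description precedes it below -/
import Mathlib

section
/- Let c, M, T > 0 and define ψ(M,a,s) = (M + (1/2)c s² − a s)²/((2/3) s³) + 2ac for a ≥ 0 and s > 0. Then the infimum of ψ(M,a,s) over a ≥ 0 and s ∈ (0,T] equals (2/3)√6 · c√(cM) if √(6M/c) < T, and equals 2cM/T + c²T/3 otherwise. -/
/-!
Completing the square in `a` gives
`ψ(M,a,s) = 3 (M - c s²/6 - a s)² / (2 s³) + 2cM/s + c²s/3`,
so for fixed `s` the infimum over `a` is `2cM/s + c²s/3`, attained at `a = M/s - cs/6`, which is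
admissible (`a ≥ 0`) exactly when `c s² ≤ 6M`. The profile `2cM/s + c²s/3` decreases up to
`s = √(6M/c)` and is minimal there; hence the minimiser is `s = √(6M/c)` (with `a = 0`) when this
lies in `(0, T]`, and `s = T` otherwise.
-/

open Set

/-- The function `ψ(M,a,s) = (M + (1/2)c s² − a s)²/((2/3) s³) + 2ac`. -/
noncomputable def psi (c M a s : ℝ) : ℝ :=
  (M + (1 / 2) * c * s ^ 2 - a * s) ^ 2 / ((2 / 3) * s ^ 3) + 2 * a * c

/-- `ψ(M, ·, s)` minimised over all real `a`. -/
noncomputable def psiMin (c M s : ℝ) : ℝ :=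
  2 * c * M / s + c ^ 2 * s / 3

lemma psi_eq_sq_add_psiMin (c M a : ℝ) {s : ℝ} (hs : s ≠ 0) :
    psi c M a s = 3 * (M - c * s ^ 2 / 6 - a * s) ^ 2 / (2 * s ^ 3) + psiMin c M s := by
  unfold psi psiMin
  field_simp
  ring

lemma psiMin_le_psi (c M a : ℝ) {s : ℝ} (hs : 0 < s) : psiMin c M s ≤ psi c M a s := by
  rw [psi_eq_sq_add_psiMin c M a hs.ne']
  have : 0 ≤ 3 * (M - c * s ^ 2 / 6 - a * s) ^ 2 / (2 * s ^ 3) := by positivity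
  linarith

lemma psi_optimal_eq_psiMin (c M : ℝ) {s : ℝ} (hs : s ≠ 0) :
    psi c M (M / s - c * s / 6) s = psiMin c M s := by
  rw [psi_eq_sq_add_psiMin c M _ hs]
  field_simp
  ring

lemma psiMin_le_of_le {c M s t : ℝ} (hc : 0 ≤ c) (hs : 0 < s) (hst : s ≤ t)
    (ht : c * t ^ 2 ≤ 6 * M) : psiMin c M t ≤ psiMin c M s := by
  have ht0 : 0 < t := hs.trans_le hst
  have key : psiMin c M s - psiMin c M t = (t - s) * c * (6 * M - c * s * t) / (3 * s * t) := by
    unfold psiMin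
    field_simp
    ring
  have : 0 ≤ 6 * M - c * s * t := by nlinarith [mul_le_mul_of_nonneg_left hst (mul_nonneg hc ht0.le)]
  have : 0 ≤ (t - s) * c * (6 * M - c * s * t) / (3 * s * t) := by
    apply div_nonneg _ (by positivity)
    exact mul_nonneg (mul_nonneg (sub_nonneg.2 hst) hc) this
  linarith

lemma psiMin_of_sq_eq {c M r : ℝ} (hr : r ≠ 0) (hcr : c * r ^ 2 = 6 * M) :
    psiMin c M r = 2 * c ^ 2 * r / 3 := by
  obtain rfl : M = c * r ^ 2 / 6 := by linarith
  unfold psiMin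
  field_simp
  ring

/-- AM–GM: at `r` with `c r² = 6M` the two terms of `psiMin` coincide. -/
lemma psiMin_le_of_sq_eq {c M r s : ℝ} (hr : 0 < r) (hcr : c * r ^ 2 = 6 * M) (hs : 0 < s) :
    psiMin c M r ≤ psiMin c M s := by
  obtain rfl : M = c * r ^ 2 / 6 := by linarith
  have key : psiMin c (c * r ^ 2 / 6) s = 2 * c ^ 2 * r / 3 + c ^ 2 * (s - r) ^ 2 / (3 * s) := by
    unfold psiMin
    field_simp
    ring
  rw [psiMin_of_sq_eq hr.ne' hcr, key]
  have : 0 ≤ c ^ 2 * (s - r) ^ 2 / (3 * s) := by positivity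
  linarith

lemma mul_sq_sqrt_six_mul_div {c M : ℝ} (hc : 0 < c) (hM : 0 ≤ M) :
    c * √(6 * M / c) ^ 2 = 6 * M := by
  rw [Real.sq_sqrt (by positivity)]
  field_simp

lemma psiMin_sqrt_six_mul_div {c M : ℝ} (hc : 0 < c) (hM : 0 < M) :
    psiMin c M √(6 * M / c) = 2 / 3 * √6 * c * √(c * M) := by
  have hcr : c * √(6 * M / c) = √6 * √(c * M) := by
    rw [← Real.sqrt_mul (by norm_num), show 6 * (c * M) = c ^ 2 * (6 * M / c) by field_simp,
      Real.sqrt_mul (sq_nonneg c), Real.sqrt_sq hc.le]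
  rw [psiMin_of_sq_eq (Real.sqrt_pos.2 (by positivity)).ne' (mul_sq_sqrt_six_mul_div hc hM.le)]
  linear_combination 2 / 3 * c * hcr

lemma isLeast_psi {c M T s₀ : ℝ} (hs₀ : s₀ ∈ Ioc 0 T) (hcs₀ : c * s₀ ^ 2 ≤ 6 * M)
    (hmin : ∀ s ∈ Ioc 0 T, psiMin c M s₀ ≤ psiMin c M s) :
    IsLeast {y : ℝ | ∃ a s, 0 ≤ a ∧ s ∈ Ioc (0 : ℝ) T ∧ y = psi c M a s} (psiMin c M s₀) := by
  refine ⟨⟨M / s₀ - c * s₀ / 6, s₀, ?_, hs₀, (psi_optimal_eq_psiMin c M hs₀.1.ne').symm⟩, ?_⟩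
  · rw [sub_nonneg, div_le_div_iff₀ (by norm_num) hs₀.1]
    linarith
  · rintro _ ⟨a, s, -, hs, rfl⟩
    exact (hmin s hs).trans (psiMin_le_psi c M a hs.1)

/-- The infimum of `ψ(M,a,s)` over `a ≥ 0` and `s ∈ (0,T]` equals
`(2/3)√6 · c√(cM)` if `√(6M/c) < T`, and `2cM/T + c²T/3` otherwise. -/
theorem inf_psi (c M T : ℝ) (hc : 0 < c) (hM : 0 < M) (hT : 0 < T) :
    sInf {y : ℝ | ∃ a s, 0 ≤ a ∧ s ∈ Set.Ioc (0 : ℝ) T ∧ y = psi c M a s}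
      = if Real.sqrt (6 * M / c) < T then
          (2 / 3) * Real.sqrt 6 * c * Real.sqrt (c * M)
        else 2 * c * M / T + c ^ 2 * T / 3 := by
  refine IsLeast.csInf_eq ?_
  split_ifs with h
  · have hr : 0 < √(6 * M / c) := Real.sqrt_pos.2 (by positivity)
    have hcr := mul_sq_sqrt_six_mul_div hc hM.le
    rw [← psiMin_sqrt_six_mul_div hc hM]
    exact isLeast_psi ⟨hr, h.le⟩ hcr.le fun s hs => psiMin_le_of_sq_eq hr hcr hs.1
  · have hcT : c * T ^ 2 ≤ 6 * M := by
      rw [← le_div_iff₀' hc, ← Real.le_sqrt hT.le (by positivity)]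
      exact not_lt.1 h
    exact isLeast_psi ⟨hT, le_rfl⟩ hcT fun s hs => psiMin_le_of_le hc.le hs.1 hs.2 hcT
end

section
/- Let c, M, T > 0 with √(6M/c) < T. Then the infimum of ψ(M,a,s) = (M + (1/2)c s² − a s)²/((2/3)s³) + 2ac over a ≥ 0, s ∈ (0,T] is attained at a = 0 and s = √(6M/c). -/
/-!
Completing the square in `a` gives
`ψ(M,a,s) = c²s/3 + 2cM/s + (3/(2s)) (M/s − cs/6 − a)²`,
so `ψ` is at least `c²s/3 + 2cM/s`, with equality at `a = M/s − cs/6`. For `r = √(6M/c)` that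
minimiser is `a = 0`, and `c²s/3 + 2cM/s − (c²r/3 + 2cM/r) = c²(s − r)²/(3s) ≥ 0`.
-/

noncomputable def psiReduced (c M s : ℝ) : ℝ :=
  c ^ 2 * s / 3 + 2 * c * M / s

section

variable {c M a r s : ℝ}

theorem psi_eq_psiReduced_add_sq (hs : s ≠ 0) :
    psi c M a s = psiReduced c M s + 3 / (2 * s) * (M / s - c * s / 6 - a) ^ 2 := by
  unfold psi psiReduced
  field_simp
  ring

theorem psiReduced_le_psi (hs : 0 < s) : psiReduced c M s ≤ psi c M a s := by
  rw [psi_eq_psiReduced_add_sq hs.ne']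
  have : 0 ≤ 3 / (2 * s) * (M / s - c * s / 6 - a) ^ 2 := by positivity
  linarith

theorem psi_zero_eq_psiReduced (hr : r ≠ 0) (hcr : c * r ^ 2 = 6 * M) :
    psi c M 0 r = psiReduced c M r := by
  have hmin : M / r - c * r / 6 - 0 = 0 := by
    field_simp
    linarith
  rw [psi_eq_psiReduced_add_sq hr, hmin]
  ring

theorem psiReduced_sub_psiReduced (hs : s ≠ 0) (hr : r ≠ 0) (hcr : c * r ^ 2 = 6 * M) :
    psiReduced c M s - psiReduced c M r = c ^ 2 / (3 * s) * (s - r) ^ 2 := by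
  unfold psiReduced
  field_simp
  linear_combination c * (s - r) * hcr

theorem psiReduced_le_psiReduced (hs : 0 < s) (hr : r ≠ 0) (hcr : c * r ^ 2 = 6 * M) :
    psiReduced c M r ≤ psiReduced c M s := by
  have := psiReduced_sub_psiReduced hs.ne' hr hcr
  have : 0 ≤ c ^ 2 / (3 * s) * (s - r) ^ 2 := by positivity
  linarith

end

theorem inf_psi_attained_interior_general (c M T : ℝ) (hc : 0 < c) (hM : 0 < M)
    (h : Real.sqrt (6 * M / c) < T) :
    Real.sqrt (6 * M / c) ∈ Set.Ioc (0 : ℝ) T ∧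
      ∀ a ∈ Set.Ici (0 : ℝ), ∀ s ∈ Set.Ioc (0 : ℝ) T,
        psi c M 0 (Real.sqrt (6 * M / c)) ≤ psi c M a s := by
  set r := Real.sqrt (6 * M / c)
  have hr : 0 < r := Real.sqrt_pos.mpr (by positivity)
  have hcr : c * r ^ 2 = 6 * M := by
    rw [Real.sq_sqrt (by positivity)]
    field_simp
  refine ⟨⟨hr, h.le⟩, fun a _ s hs => ?_⟩
  calc psi c M 0 r = psiReduced c M r := psi_zero_eq_psiReduced hr.ne' hcr
    _ ≤ psiReduced c M s := psiReduced_le_psiReduced hs.1 hr.ne' hcr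
    _ ≤ psi c M a s := psiReduced_le_psi hs.1

/-- If `√(6M/c) < T`, the infimum of `ψ(M,a,s)` over `a ≥ 0`, `s ∈ (0,T]` is
attained at `a = 0`, `s = √(6M/c)`. -/
theorem inf_psi_attained_interior (c M T : ℝ) (hc : 0 < c) (hM : 0 < M) (hT : 0 < T)
    (h : Real.sqrt (6 * M / c) < T) :
    Real.sqrt (6 * M / c) ∈ Set.Ioc (0 : ℝ) T ∧
      ∀ a ∈ Set.Ici (0 : ℝ), ∀ s ∈ Set.Ioc (0 : ℝ) T,
        psi c M 0 (Real.sqrt (6 * M / c)) ≤ psi c M a s :=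
  inf_psi_attained_interior_general c M T hc hM h
end

section
/- Let c, M, T > 0 with √(6M/c) ≥ T. Then the infimum of ψ(M,a,s) = (M + (1/2)c s² − a s)²/((2/3)s³) + 2ac over a ≥ 0, s ∈ (0,T] is attained at a = M/T − cT/6 and s = T. -/
/-- If `√(6M/c) ≥ T`, the infimum of `ψ(M,a,s)` over `a ≥ 0`, `s ∈ (0,T]` is
attained at `a = M/T − cT/6`, `s = T`. -/
theorem inf_psi_attained_boundary (c M T : ℝ) (hc : 0 < c) (hM : 0 < M) (hT : 0 < T)
    (h : T ≤ Real.sqrt (6 * M / c)) :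
    0 ≤ M / T - c * T / 6 ∧
      ∀ a ∈ Set.Ici (0 : ℝ), ∀ s ∈ Set.Ioc (0 : ℝ) T,
        psi c M (M / T - c * T / 6) T ≤ psi c M a s := by
  have hT2 : T ^ 2 ≤ 6 * M / c := by
    have := Real.sqrt_le_sqrt (le_of_eq (Real.sqrt_sq hT.le).symm)
    nlinarith [Real.sq_sqrt (by positivity : (0:ℝ) ≤ 6 * M / c),
      Real.sqrt_nonneg (6 * M / c), h, hT.le, mul_self_nonneg (Real.sqrt (6*M/c) - T)]
  have hcT2 : c * T ^ 2 ≤ 6 * M := by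
    rw [le_div_iff₀ hc] at hT2; linarith
  constructor
  · rw [sub_nonneg, div_le_div_iff₀ (by norm_num) hT]
    nlinarith
  · rintro a _ s ⟨hs0, hsT⟩
    have hval : psi c M (M / T - c * T / 6) T = 2 * c * M / T + c ^ 2 * T / 3 := by
      unfold psi; field_simp; ring
    rw [hval]
    have key : psi c M a s - (2 * c * M / T + c ^ 2 * T / 3) =
        (9 * T * (M + 1 / 2 * c * s ^ 2 - a * s - 2 * c * s ^ 2 / 3) ^ 2 +
          2 * s ^ 2 * c * (T - s) * (6 * M - c * s * T)) / (6 * s ^ 3 * T) := by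
      unfold psi; field_simp; ring
    have hnum : 0 ≤ 9 * T * (M + 1 / 2 * c * s ^ 2 - a * s - 2 * c * s ^ 2 / 3) ^ 2 +
        2 * s ^ 2 * c * (T - s) * (6 * M - c * s * T) := by
      have h1 : 0 ≤ 6 * M - c * s * T := by nlinarith
      have h2 : 0 ≤ T - s := by linarith
      positivity
    have := div_nonneg hnum (by positivity : (0:ℝ) ≤ 6 * s ^ 3 * T)
    linarith [key ▸ this]
end

section
/- The set 𝒮 := { f ∈ Ω : q[f](0) = a and ∫_0^T q[f](s) ds ≥ M } is closed in Ω with respect to the norm ‖f‖_Ω := sup_{t∈ℝ} |f(t)|/(1+|t|), where q[f](t) := sup_{s ≤ t} (f(t) − f(s) − c(t − s)). -/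
open Filter

/-- The path space `Ω`: continuous functions vanishing at `0` with
`f(t)/(1+|t|) → 0` as `t → ±∞`. -/
def OmegaSpace : Set (ℝ → ℝ) :=
  {f | Continuous f ∧ f 0 = 0 ∧
    Tendsto (fun t => f t / (1 + |t|)) atTop (nhds 0) ∧
    Tendsto (fun t => f t / (1 + |t|)) atBot (nhds 0)}

/-- The `Ω`-norm `‖f‖_Ω = sup_t |f(t)|/(1+|t|)`. -/
noncomputable def omegaNorm (f : ℝ → ℝ) : ℝ := ⨆ t : ℝ, |f t| / (1 + |t|)

/-- The workload map `q[f](t) = sup_{s ≤ t} (f(t) − f(s) − c(t−s))`. -/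
noncomputable def workload (c : ℝ) (f : ℝ → ℝ) (t : ℝ) : ℝ :=
  sSup {y : ℝ | ∃ s ≤ t, y = f t - f s - c * (t - s)}

/-! ### Auxiliary lemmas -/

lemma tail_small {f : ℝ → ℝ} (hf : Tendsto (fun t => f t / (1 + |t|)) atBot (nhds 0))
    {ε : ℝ} (hε : 0 < ε) : ∃ R : ℝ, 0 ≤ R ∧ ∀ s ≤ -R, |f s| ≤ ε * (1 + |s|) := by
  have h1 : ∀ᶠ s in atBot, |f s / (1 + |s|)| ≤ ε := by
    have := hf.abs
    rw [abs_zero] at this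
    exact this.eventually_le_const hε
  obtain ⟨Y, hY⟩ := eventually_atBot.mp h1
  refine ⟨max 0 (-Y), le_max_left _ _, fun s hs => ?_⟩
  have hsY : s ≤ Y := le_trans hs (by
    have : -max 0 (-Y) ≤ -(-Y) := neg_le_neg (le_max_right _ _)
    simpa using this)
  have h2 := hY s hsY
  have hpos : (0:ℝ) < 1 + |s| := by positivity
  rw [abs_div, abs_of_pos hpos, div_le_iff₀ hpos] at h2
  linarith

lemma bddAbove_normRange {g : ℝ → ℝ} (hg : Continuous g)
    (htop : Tendsto (fun t => g t / (1 + |t|)) atTop (nhds 0))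
    (hbot : Tendsto (fun t => g t / (1 + |t|)) atBot (nhds 0)) :
    BddAbove (Set.range fun t => |g t| / (1 + |t|)) := by
  have hpos : ∀ t : ℝ, (0:ℝ) < 1 + |t| := fun t => by positivity
  have heq : ∀ t : ℝ, |g t / (1 + |t|)| = |g t| / (1 + |t|) := fun t => by
    rw [abs_div, abs_of_pos (hpos t)]
  have h1 : ∀ᶠ t in atTop, |g t| / (1 + |t|) ≤ 1 := by
    have := htop.abs; rw [abs_zero] at this
    filter_upwards [this.eventually_le_const one_pos] with t ht
    rwa [heq t] at ht
  have h2 : ∀ᶠ t in atBot, |g t| / (1 + |t|) ≤ 1 := by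
    have := hbot.abs; rw [abs_zero] at this
    filter_upwards [this.eventually_le_const one_pos] with t ht
    rwa [heq t] at ht
  obtain ⟨X, hX⟩ := eventually_atTop.mp h1
  obtain ⟨Y, hY⟩ := eventually_atBot.mp h2
  have hcont : Continuous fun t : ℝ => |g t| / (1 + |t|) :=
    hg.abs.div (by continuity) (fun t => (hpos t).ne')
  obtain ⟨C, hC⟩ := (isCompact_Icc (a := Y) (b := max X Y)).bddAbove_image
    hcont.continuousOn
  refine ⟨max C 1, ?_⟩
  rintro _ ⟨t, rfl⟩
  rcases le_total t Y with h | h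
  · exact le_trans (hY t h) (le_max_right _ _)
  · rcases le_total t (max X Y) with h' | h'
    · exact le_trans (hC ⟨t, ⟨h, h'⟩, rfl⟩) (le_max_left _ _)
    · exact le_trans (hX t (le_trans (le_max_left _ _) h')) (le_max_right _ _)

lemma le_workload {c : ℝ} {f : ℝ → ℝ} {t : ℝ}
    (hA : BddAbove {y : ℝ | ∃ s ≤ t, y = f t - f s - c * (t - s)})
    {s : ℝ} (hst : s ≤ t) : f t - f s - c * (t - s) ≤ workload c f t :=
  le_csSup hA ⟨s, hst, rfl⟩

lemma workload_le {c : ℝ} {f : ℝ → ℝ} {t b : ℝ}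
    (H : ∀ s ≤ t, f t - f s - c * (t - s) ≤ b) : workload c f t ≤ b := by
  unfold workload
  have hne : Set.Nonempty {y : ℝ | ∃ s ≤ t, y = f t - f s - c * (t - s)} :=
    ⟨0, t, le_rfl, by ring⟩
  apply csSup_le hne
  rintro y ⟨s, hst, rfl⟩
  exact H s hst

def Bset (c : ℝ) (f : ℝ → ℝ) (t : ℝ) : Set ℝ := {y | ∃ s ≤ t, y = c * s - f s}

lemma Bset_nonempty (c : ℝ) (f : ℝ → ℝ) (t : ℝ) : (Bset c f t).Nonempty :=
  ⟨c * t - f t, t, le_rfl, rfl⟩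

lemma bddAbove_Bset {c : ℝ} (hc : 0 < c) {f : ℝ → ℝ} (hfc : Continuous f)
    (hfb : Tendsto (fun t => f t / (1 + |t|)) atBot (nhds 0)) (t : ℝ) :
    BddAbove (Bset c f t) := by
  obtain ⟨R, hR0, hR⟩ := tail_small hfb (half_pos hc)
  obtain ⟨C, hC⟩ := (isCompact_Icc (a := -R) (b := t)).bddAbove_image
    (Continuous.continuousOn (by continuity : Continuous fun s : ℝ => c * s - f s))
  refine ⟨max C (c/2), ?_⟩
  rintro y ⟨s, hst, rfl⟩
  rcases le_or_gt s (-R) with h | h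
  · have h1 := hR s h
    have hs0 : s ≤ 0 := le_trans h (by linarith)
    have h2 : -f s ≤ c/2 * (1 + |s|) := by
      have := (abs_le.mp h1).1; linarith
    rw [abs_of_nonpos hs0] at h2
    have : c * s - f s ≤ c/2 := by nlinarith
    exact le_trans this (le_max_right _ _)
  · exact le_trans (hC ⟨s, ⟨h.le, hst⟩, rfl⟩) (le_max_left _ _)

lemma bddAbove_Aset {c : ℝ} (hc : 0 < c) {f : ℝ → ℝ} (hfc : Continuous f)
    (hfb : Tendsto (fun t => f t / (1 + |t|)) atBot (nhds 0)) (t : ℝ) :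
    BddAbove {y : ℝ | ∃ s ≤ t, y = f t - f s - c * (t - s)} := by
  obtain ⟨b, hb⟩ := bddAbove_Bset hc hfc hfb t
  refine ⟨f t - c * t + b, ?_⟩
  rintro y ⟨s, hst, rfl⟩
  have h1 : c * s - f s ≤ b := hb ⟨s, hst, rfl⟩
  have : f t - f s - c * (t - s) = f t - c * t + (c * s - f s) := by ring
  linarith

lemma workload_eq {c : ℝ} (hc : 0 < c) {f : ℝ → ℝ} (hfc : Continuous f)
    (hfb : Tendsto (fun t => f t / (1 + |t|)) atBot (nhds 0)) (t : ℝ) :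
    workload c f t = f t - c * t + sSup (Bset c f t) := by
  have hB := bddAbove_Bset hc hfc hfb t
  have hA := bddAbove_Aset hc hfc hfb t
  apply le_antisymm
  · apply workload_le
    intro s hst
    have h1 : c * s - f s ≤ sSup (Bset c f t) := le_csSup hB ⟨s, hst, rfl⟩
    linarith [(by ring : f t - f s - c * (t - s) = f t - c * t + (c * s - f s))]
  · have h2 : sSup (Bset c f t) ≤ workload c f t - (f t - c * t) := by
      apply csSup_le (Bset_nonempty c f t)
      rintro y ⟨s, hst, rfl⟩
      have h1 := le_workload (c := c) hA hst
      linarith [(by ring : f t - f s - c * (t - s) = f t - c * t + (c * s - f s))]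
    linarith

lemma workload_le_add {c R D : ℝ} {g h : ℝ → ℝ} {t : ℝ}
    (hBh : BddAbove {y : ℝ | ∃ s ≤ t, y = h t - h s - c * (t - s)})
    (hD : 0 ≤ D)
    (htail : ∀ s ≤ -R, g t - g s - c * (t - s) ≤ 0)
    (hnear : ∀ s, -R ≤ s → s ≤ t → g t - g s ≤ h t - h s + D) :
    workload c g t ≤ workload c h t + D := by
  have hwh : (0:ℝ) ≤ workload c h t := by
    have := le_workload (c := c) hBh (le_refl t)
    simpa using this
  apply workload_le
  intro s hst
  rcases le_or_gt s (-R) with hs | hs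
  · linarith [htail s hs]
  · have h1 := le_workload (c := c) hBh hst
    have h2 := hnear s hs.le hst
    linarith

lemma Bsup_monotone {c : ℝ} (hc : 0 < c) {f : ℝ → ℝ} (hfc : Continuous f)
    (hfb : Tendsto (fun t => f t / (1 + |t|)) atBot (nhds 0)) :
    Monotone (fun t => sSup (Bset c f t)) := by
  intro s t hst
  exact csSup_le_csSup (bddAbove_Bset hc hfc hfb t) (Bset_nonempty c f s)
    (fun y ⟨u, hu, h⟩ => ⟨u, le_trans hu hst, h⟩)

lemma workload_intervalIntegrable {c : ℝ} (hc : 0 < c) {f : ℝ → ℝ} (hfc : Continuous f)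
    (hfb : Tendsto (fun t => f t / (1 + |t|)) atBot (nhds 0)) (a b : ℝ) :
    IntervalIntegrable (workload c f) MeasureTheory.volume a b := by
  have heq : workload c f = fun t => (f t - c * t) + sSup (Bset c f t) :=
    funext (workload_eq hc hfc hfb)
  rw [heq]
  exact ((hfc.sub (continuous_const.mul continuous_id)).intervalIntegrable a b).add
    (((Bsup_monotone hc hfc hfb).monotoneOn _).intervalIntegrable)

/-- The set `𝒮 = {f ∈ Ω : q[f](0) = a, ∫_0^T q[f](s) ds ≥ M}` is closed in `Ω`
with respect to `‖·‖_Ω`: if `fₙ ∈ 𝒮` and `‖fₙ − f‖_Ω → 0` for some `f ∈ Ω`,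
then `f ∈ 𝒮`. -/
theorem scrS_closed (c a T M : ℝ) (hc : 0 < c) (ha : 0 ≤ a) (hT : 0 < T) (hM : 0 < M)
    (fn : ℕ → (ℝ → ℝ)) (f : ℝ → ℝ)
    (hfn : ∀ n, fn n ∈ OmegaSpace) (hf : f ∈ OmegaSpace)
    (hfnS : ∀ n, workload c (fn n) 0 = a ∧ M ≤ ∫ s in (0 : ℝ)..T, workload c (fn n) s)
    (hconv : Tendsto (fun n => omegaNorm (fn n - f)) atTop (nhds 0)) :
    workload c f 0 = a ∧ M ≤ ∫ s in (0 : ℝ)..T, workload c f s := by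
  obtain ⟨hfc, hf0, hftop, hfbot⟩ := hf
  set ε : ℕ → ℝ := fun n => omegaNorm (fn n - f) with hεdef
  -- pointwise bound from the Ω-norm, and nonnegativity of ε
  have hkey : ∀ n, 0 ≤ ε n ∧ ∀ s : ℝ, |fn n s - f s| ≤ ε n * (1 + |s|) := by
    intro n
    obtain ⟨hnc, hn0, hntop, hnbot⟩ := hfn n
    have hgc : Continuous (fn n - f) := hnc.sub hfc
    have hgtop : Tendsto (fun t => (fn n - f) t / (1 + |t|)) atTop (nhds 0) := by
      have := hntop.sub hftop
      simpa [sub_div] using this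
    have hgbot : Tendsto (fun t => (fn n - f) t / (1 + |t|)) atBot (nhds 0) := by
      have := hnbot.sub hfbot
      simpa [sub_div] using this
    have hbdd := bddAbove_normRange hgc hgtop hgbot
    have hle : ∀ s : ℝ, |(fn n - f) s| / (1 + |s|) ≤ ε n := fun s => le_ciSup hbdd s
    constructor
    · exact le_trans (by positivity) (hle 0)
    · intro s
      have hpos : (0:ℝ) < 1 + |s| := by positivity
      have := (div_le_iff₀ hpos).mp (hle s)
      simpa [Pi.sub_apply] using this
  -- bound on f over [0, T]
  obtain ⟨K, hK⟩ := (isCompact_Icc (a := (0:ℝ)) (b := T)).exists_bound_of_continuousOn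
    hfc.continuousOn
  have hK' : ∀ t ∈ Set.Icc (0:ℝ) T, |f t| ≤ K := by
    intro t ht; have := hK t ht; rwa [Real.norm_eq_abs] at this
  have hK0 : 0 ≤ K := le_trans (abs_nonneg _) (hK' 0 ⟨le_rfl, hT.le⟩)
  -- cutoff radius R
  obtain ⟨R0, hR00, hR0⟩ := tail_small hfbot (by positivity : (0:ℝ) < c/4)
  set R : ℝ := max (max R0 T) (2/c*(K+1+T)+1) with hRdef
  have hRT : T ≤ R := le_trans (le_max_right _ _) (le_max_left _ _)
  have hRR0 : R0 ≤ R := le_trans (le_max_left _ _) (le_max_left _ _)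
  have hRnn : 0 ≤ R := le_trans hR00 hRR0
  have hRbig : K + 1 + T + c/2 ≤ c/2 * R := by
    have h1 : 2/c*(K+1+T)+1 ≤ R := le_max_right _ _
    have h2 : c/2 * (2/c*(K+1+T)+1) ≤ c/2 * R :=
      mul_le_mul_of_nonneg_left h1 (by positivity)
    have h3 : c/2 * (2/c*(K+1+T)+1) = (K+1+T) + c/2 := by
      field_simp
    linarith
  -- tail bounds
  have htailf : ∀ t ∈ Set.Icc (0:ℝ) T, ∀ s ≤ -R, f t - f s - c * (t - s) ≤ 0 := by
    intro t ht s hs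
    have hsR0 : s ≤ -R0 := le_trans hs (by linarith)
    have hfs := (abs_le.mp (hR0 s hsR0)).1
    have hs0 : s ≤ 0 := le_trans hs (by linarith)
    rw [abs_of_nonpos hs0] at hfs
    have hft : f t ≤ K := (abs_le.mp (hK' t ht)).2
    have ht0 : 0 ≤ t := ht.1
    nlinarith [mul_nonneg hc.le ht0]
  have htailn : ∀ n, ε n ≤ 1 → ε n ≤ c/4 → ∀ t ∈ Set.Icc (0:ℝ) T, ∀ s ≤ -R,
      fn n t - fn n s - c * (t - s) ≤ 0 := by
    intro n hε1 hεc t ht s hs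
    have hd := (hkey n).2
    have hε0 := (hkey n).1
    have hsR0 : s ≤ -R0 := le_trans hs (by linarith)
    have hfs := (abs_le.mp (hR0 s hsR0)).1
    have hs0 : s ≤ 0 := le_trans hs (by linarith)
    rw [abs_of_nonpos hs0] at hfs
    have hft : f t ≤ K := (abs_le.mp (hK' t ht)).2
    have ht0 : 0 ≤ t := ht.1
    have htT : t ≤ T := ht.2
    have hdt := (abs_le.mp (hd t)).2
    have hds := (abs_le.mp (hd s)).1
    rw [abs_of_nonneg ht0] at hdt
    rw [abs_of_nonpos hs0] at hds
    -- fn t ≤ f t + ε(1+t) ≤ K + 1 + T ; -fn s ≤ -f s + ε(1-s) ≤ c/2 (1-s)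
    have h1 : fn n t ≤ K + 1 + T := by nlinarith
    have h2 : -(fn n s) ≤ c/2 * (1 - s) := by nlinarith
    nlinarith [mul_nonneg hc.le ht0]
  -- bddAbove of workload sets
  have hAf := fun t => bddAbove_Aset hc hfc hfbot t
  have hAn : ∀ n t, BddAbove {y : ℝ | ∃ s ≤ t, y = fn n t - fn n s - c * (t - s)} :=
    fun n t => bddAbove_Aset hc (hfn n).1 (hfn n).2.2.2 t
  -- main uniform estimate
  have hest : ∀ n, ε n ≤ 1 → ε n ≤ c/4 → ∀ t ∈ Set.Icc (0:ℝ) T,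
      |workload c (fn n) t - workload c f t| ≤ 2 * ε n * (1 + R) := by
    intro n hε1 hεc t ht
    have hd := (hkey n).2
    have hε0 := (hkey n).1
    have hD : 0 ≤ 2 * ε n * (1 + R) := by positivity
    have htR : |t| ≤ R := by
      rw [abs_of_nonneg ht.1]; exact le_trans ht.2 hRT
    have hnear : ∀ s, -R ≤ s → s ≤ t →
        |fn n t - f t| + |fn n s - f s| ≤ 2 * ε n * (1 + R) := by
      intro s hs1 hs2
      have hsR : |s| ≤ R := abs_le.mpr ⟨hs1, le_trans hs2 (le_trans ht.2 hRT)⟩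
      have h1 := hd t
      have h2 := hd s
      nlinarith [abs_nonneg (fn n t - f t), abs_nonneg (fn n s - f s)]
    rw [abs_sub_le_iff]
    constructor
    · have := workload_le_add (R := R) (hAf t) hD (htailn n hε1 hεc t ht)
        (fun s hs1 hs2 => by
          have h3 := hnear s hs1 hs2
          have h4 : fn n t - f t ≤ |fn n t - f t| := le_abs_self _
          have h5 : -(|fn n s - f s|) ≤ fn n s - f s := neg_abs_le _
          linarith)
      linarith
    · have := workload_le_add (R := R) (hAn n t) hD (htailf t ht)
        (fun s hs1 hs2 => by
          have h3 := hnear s hs1 hs2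
          have h4 : f t - fn n t ≤ |fn n t - f t| := by
            have := le_abs_self (f t - fn n t); rwa [abs_sub_comm] at this
          have h5 : fn n s - f s ≤ |fn n s - f s| := le_abs_self _
          linarith)
      linarith
  -- eventual smallness
  have hev : ∀ᶠ n in atTop, ε n ≤ 1 ∧ ε n ≤ c/4 := by
    filter_upwards [hconv.eventually_lt_const one_pos,
      hconv.eventually_lt_const (by positivity : (0:ℝ) < c/4)] with n h1 h2
    exact ⟨h1.le, h2.le⟩
  have hDlim : Tendsto (fun n => 2 * ε n * (1 + R)) atTop (nhds 0) := by
    have := (hconv.const_mul 2).mul_const (1 + R)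
    simpa using this
  -- part (a)
  have h0T : (0:ℝ) ∈ Set.Icc (0:ℝ) T := ⟨le_rfl, hT.le⟩
  have haw : |a - workload c f 0| ≤ 0 := by
    apply ge_of_tendsto hDlim
    filter_upwards [hev] with n ⟨h1, h2⟩
    have := hest n h1 h2 0 h0T
    rwa [(hfnS n).1] at this
  have hawe : workload c f 0 = a := by
    obtain ⟨u1, u2⟩ := abs_le.mp haw
    linarith
  refine ⟨hawe, ?_⟩
  -- part (b)
  have hIf := workload_intervalIntegrable hc hfc hfbot 0 T
  have hIn : ∀ n, IntervalIntegrable (workload c (fn n)) MeasureTheory.volume 0 T :=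
    fun n => workload_intervalIntegrable hc (hfn n).1 (hfn n).2.2.2 0 T
  have hint : ∀ᶠ n in atTop,
      M ≤ (∫ s in (0:ℝ)..T, workload c f s) + 2 * ε n * (1 + R) * T := by
    filter_upwards [hev] with n ⟨h1, h2⟩
    have hptw : ∀ s ∈ Set.Icc (0:ℝ) T,
        workload c (fn n) s ≤ workload c f s + 2 * ε n * (1 + R) := by
      intro s hs
      have := (abs_le.mp (hest n h1 h2 s hs)).2
      linarith
    have hmono : (∫ s in (0:ℝ)..T, workload c (fn n) s) ≤
        ∫ s in (0:ℝ)..T, (workload c f s + 2 * ε n * (1 + R)) :=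
      intervalIntegral.integral_mono_on hT.le (hIn n)
        (hIf.add intervalIntegrable_const) hptw
    have hsplit : (∫ s in (0:ℝ)..T, (workload c f s + 2 * ε n * (1 + R))) =
        (∫ s in (0:ℝ)..T, workload c f s) + 2 * ε n * (1 + R) * T := by
      rw [intervalIntegral.integral_add hIf intervalIntegrable_const,
        intervalIntegral.integral_const]
      simp [smul_eq_mul]
      ring
    have hMn := (hfnS n).2
    linarith
  have hlim : Tendsto (fun n => (∫ s in (0:ℝ)..T, workload c f s) + 2 * ε n * (1 + R) * T)
      atTop (nhds (∫ s in (0:ℝ)..T, workload c f s)) := by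
    have h1 : Tendsto (fun _ : ℕ => ∫ s in (0:ℝ)..T, workload c f s) atTop
        (nhds (∫ s in (0:ℝ)..T, workload c f s)) := tendsto_const_nhds
    have := h1.add (hDlim.mul_const T)
    simpa using this
  exact ge_of_tendsto hlim hint
end
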